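/- Let a < b be reals. Suppose η¹ : [a,b] → (symmetric d × d matrices) with −η¹(f) positive definite for all f, η² : [a,b] → ℝ^d, and c : [a,b] → ℝ are measurable and such that p(θ,f) := exp( θᵀη¹(f)θ + η²(f)ᵀθ + c(f) ) satisfies 0 < ∫_a^b ∫_{ℝ^d} p(θ,f) dθ df < ∞. Then the marginal m(f) := ∫_{ℝ^d} p(θ,f) dθ equals π^{d/2} det(−η¹(f))^{−1/2} exp( c(f) − (1/4) η²(f)ᵀ η¹(f)⁻¹ η²(f) ). Consequently, among all structured densities q(θ,f) = q_C(θ|f) q_F(f) with q_F a probability density on [a,b] and q_C(·|f) probability densities on ℝ^d, the ELBO ∫∫ q log(p/q) is maximized by taking q_C(·|f) to be the Gaussian density with canonical parameters (η¹(f), η²(f)) and q_F(f) proportional to exp( c(f) − (1/4) η²(f)ᵀ η¹(f)⁻¹ η²(f) − (1/2) log det(−η¹(f)) ). -/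

import Mathlib

open MeasureTheory Matrix

/-- The product measure on `ℝ^d × [a,b]`: Lebesgue measure on `ℝ^d` times Lebesgue
measure restricted to the interval `[a,b]`. -/
noncomputable def thetaFreqMeasure (d : ℕ) (a b : ℝ) : Measure ((Fin d → ℝ) × ℝ) :=
  (volume : Measure (Fin d → ℝ)).prod (volume.restrict (Set.Icc a b))

/-- The ELBO of `p` relative to a structured density `q(θ,f) = qC(θ|f)·qF(f)` on
`ℝ^d × [a,b]`. -/
noncomputable def structuredELBO {d : ℕ} (a b : ℝ)
    (p qC : (Fin d → ℝ) → ℝ → ℝ) (qF : ℝ → ℝ) : ℝ :=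
  ∫ pr, (qC pr.1 pr.2 * qF pr.2) *
      Real.log (p pr.1 pr.2 / (qC pr.1 pr.2 * qF pr.2)) ∂(thetaFreqMeasure d a b)

section Aux

lemma det_nonneg_of_posSemidef' {d : ℕ} {C : Matrix (Fin d) (Fin d) ℝ} (hC : C.PosSemidef) :
    0 ≤ C.det := by
  rw [hC.1.det_eq_prod_eigenvalues]
  exact Finset.prod_nonneg fun i _ => hC.eigenvalues_nonneg i

lemma gaussian_pi_integral (d : ℕ) :
    ∫ y : Fin d → ℝ, Real.exp (-(y ⬝ᵥ y)) = Real.pi ^ ((d : ℝ) / 2) := by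
  have h : ∀ y : Fin d → ℝ, Real.exp (-(y ⬝ᵥ y)) = ∏ i, Real.exp (-(y i) ^ 2) := by
    intro y
    rw [← Real.exp_sum]
    congr 1
    simp [dotProduct, Finset.sum_neg_distrib, sq]
  simp_rw [h]
  rw [MeasureTheory.volume_pi, integral_fintype_prod_eq_pow (ι := Fin d) (fun x : ℝ => Real.exp (-x ^ 2))]
  have : ∫ x : ℝ, Real.exp (-x ^ 2) = Real.sqrt Real.pi := by
    simpa using integral_gaussian 1
  rw [this, Fintype.card_fin]
  rw [Real.sqrt_eq_rpow, ← Real.rpow_natCast (Real.pi ^ (1/2 : ℝ)) d,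
    ← Real.rpow_mul Real.pi_nonneg]
  ring_nf

open scoped MatrixOrder in
lemma gaussian_matrix_integral {d : ℕ} {S : Matrix (Fin d) (Fin d) ℝ} (hS : S.PosDef) :
    ∫ θ : Fin d → ℝ, Real.exp (-(θ ⬝ᵥ S *ᵥ θ)) =
      Real.pi ^ ((d : ℝ) / 2) * S.det ^ (-(1:ℝ) / 2) := by
  classical
  set C := CFC.sqrt S with hCdef
  have hCC : C * C = S := CFC.sqrt_mul_sqrt_self S hS.posSemidef.nonneg
  have hCsymm : Cᵀ = C := by
    have := (CFC.sqrt_nonneg S).posSemidef.1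
    simpa [Matrix.IsHermitian, Matrix.conjTranspose_eq_transpose_of_trivial, ← hCdef] using this
  have hdet2 : C.det * C.det = S.det := by rw [← Matrix.det_mul, hCC]
  have hdetC_nonneg : 0 ≤ C.det := det_nonneg_of_posSemidef' (CFC.sqrt_nonneg S).posSemidef
  have hdetC_pos : 0 < C.det := by
    rcases hdetC_nonneg.lt_or_eq with h | h
    · exact h
    · exfalso; have := hS.det_pos; rw [← hdet2, ← h] at this; simp at this
  have key : ∀ θ : Fin d → ℝ, θ ⬝ᵥ S *ᵥ θ = (C *ᵥ θ) ⬝ᵥ (C *ᵥ θ) := by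
    intro θ
    rw [← hCC, ← Matrix.mulVec_mulVec, Matrix.dotProduct_mulVec θ C]
    congr 1
    conv_rhs => rw [← hCsymm, Matrix.mulVec_transpose]
  have hdetlin : LinearMap.det (Matrix.toLin' C) ≠ 0 := by
    rw [LinearMap.det_toLin']; exact hdetC_pos.ne'
  have hmap := Real.map_linearMap_volume_pi_eq_smul_volume_pi hdetlin
  have hg : AEStronglyMeasurable (fun y : Fin d → ℝ => Real.exp (-(y ⬝ᵥ y)))
      (Measure.map (Matrix.toLin' C) volume) := by
    apply Continuous.aestronglyMeasurable
    exact Real.continuous_exp.comp ((continuous_id.dotProduct continuous_id).neg)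
  have hint : ∫ θ : Fin d → ℝ, Real.exp (-((C *ᵥ θ) ⬝ᵥ (C *ᵥ θ)))
      = (C.det)⁻¹ * ∫ y : Fin d → ℝ, Real.exp (-(y ⬝ᵥ y)) := by
    have := MeasureTheory.integral_map (φ := ⇑(Matrix.toLin' C)) (μ := volume)
      (f := fun y : Fin d → ℝ => Real.exp (-(y ⬝ᵥ y)))
      (Matrix.toLin' C).continuous_of_finiteDimensional.measurable.aemeasurable hg
    rw [hmap] at this
    rw [integral_smul_measure] at this
    simp only [Matrix.toLin'_apply] at this
    rw [← this]
    rw [LinearMap.det_toLin']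
    rw [ENNReal.toReal_ofReal (by positivity), abs_of_nonneg (by positivity)]
    rfl
  simp_rw [key]
  rw [hint, gaussian_pi_integral]
  have : S.det ^ (-(1:ℝ)/2) = (C.det)⁻¹ := by
    rw [← hdet2, ← sq, ← Real.rpow_natCast C.det 2, ← Real.rpow_mul hdetC_nonneg]
    norm_num [Real.rpow_neg_one]
  rw [this]; ring

lemma dot_mulVec_symm {d : ℕ} {A : Matrix (Fin d) (Fin d) ℝ} (hA : A.IsSymm)
    (u v : Fin d → ℝ) : u ⬝ᵥ A *ᵥ v = v ⬝ᵥ A *ᵥ u := by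
  rw [Matrix.dotProduct_mulVec, ← Matrix.mulVec_transpose, hA.eq, dotProduct_comm]

lemma complete_square {d : ℕ} {A : Matrix (Fin d) (Fin d) ℝ} (hA : A.IsSymm)
    (hdet : A.det ≠ 0) (b : Fin d → ℝ) (θ : Fin d → ℝ) :
    θ ⬝ᵥ A *ᵥ θ + b ⬝ᵥ θ =
      (θ + (1/2 : ℝ) • (A⁻¹ *ᵥ b)) ⬝ᵥ A *ᵥ (θ + (1/2 : ℝ) • (A⁻¹ *ᵥ b))
        - (1/4) * (b ⬝ᵥ A⁻¹ *ᵥ b) := by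
  set m : Fin d → ℝ := (1/2 : ℝ) • (A⁻¹ *ᵥ b) with hm
  have hAm : A *ᵥ m = (1/2 : ℝ) • b := by
    rw [hm, Matrix.mulVec_smul, Matrix.mulVec_mulVec,
      Matrix.mul_nonsing_inv _ (isUnit_iff_ne_zero.mpr hdet), Matrix.one_mulVec]
  have h1 : θ ⬝ᵥ A *ᵥ m = (1/2) * (b ⬝ᵥ θ) := by
    rw [hAm, dotProduct_smul, smul_eq_mul, dotProduct_comm]
  have h2 : m ⬝ᵥ A *ᵥ θ = (1/2) * (b ⬝ᵥ θ) := by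
    rw [dot_mulVec_symm hA, h1]
  have h3 : m ⬝ᵥ A *ᵥ m = (1/4) * (b ⬝ᵥ A⁻¹ *ᵥ b) := by
    rw [hAm, dotProduct_smul, smul_eq_mul, hm, smul_dotProduct, smul_eq_mul,
      dotProduct_comm]
    ring
  rw [Matrix.mulVec_add, dotProduct_add, add_dotProduct, add_dotProduct,
    h1, h2, h3]
  ring

lemma gaussian_quad_integral {d : ℕ} {A : Matrix (Fin d) (Fin d) ℝ} (hA : A.IsSymm)
    (hpd : (-A).PosDef) (b : Fin d → ℝ) :
    ∫ θ : Fin d → ℝ, Real.exp (θ ⬝ᵥ A *ᵥ θ + b ⬝ᵥ θ)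
      = Real.pi ^ ((d : ℝ) / 2) * (-A).det ^ (-(1:ℝ) / 2) *
          Real.exp (-(1/4) * (b ⬝ᵥ A⁻¹ *ᵥ b)) := by
  have hdet : A.det ≠ 0 := by
    intro h
    have h2 : (-A).det = 0 := by rw [Matrix.det_neg, h, mul_zero]
    exact hpd.det_pos.ne' h2
  simp_rw [fun θ => complete_square hA hdet b θ, Real.exp_sub]
  rw [integral_div]
  rw [MeasureTheory.integral_add_right_eq_self
    (fun θ : Fin d → ℝ => Real.exp (θ ⬝ᵥ A *ᵥ θ)) ((1/2 : ℝ) • (A⁻¹ *ᵥ b))]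
  have : ∀ θ : Fin d → ℝ, θ ⬝ᵥ A *ᵥ θ = -(θ ⬝ᵥ (-A) *ᵥ θ) := by
    intro θ; rw [Matrix.neg_mulVec, dotProduct_neg, neg_neg]
  simp_rw [this]
  rw [gaussian_matrix_integral hpd, div_eq_mul_inv, ← Real.exp_neg]
  ring_nf

lemma gaussian_quad_const_integral {d : ℕ} {A : Matrix (Fin d) (Fin d) ℝ} (hA : A.IsSymm)
    (hpd : (-A).PosDef) (b : Fin d → ℝ) (cst : ℝ) :
    ∫ θ : Fin d → ℝ, Real.exp (θ ⬝ᵥ A *ᵥ θ + b ⬝ᵥ θ + cst)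
      = Real.pi ^ ((d : ℝ) / 2) * (-A).det ^ (-(1:ℝ) / 2) *
          Real.exp (cst - (1/4) * (b ⬝ᵥ A⁻¹ *ᵥ b)) := by
  have hsplit : ∀ θ : Fin d → ℝ,
      Real.exp (θ ⬝ᵥ A *ᵥ θ + b ⬝ᵥ θ + cst)
        = Real.exp (θ ⬝ᵥ A *ᵥ θ + b ⬝ᵥ θ) * Real.exp cst := fun θ => Real.exp_add _ _
  simp_rw [hsplit]
  rw [integral_mul_const, gaussian_quad_integral hA hpd b, mul_assoc, ← Real.exp_add]
  ring_nf

end Aux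

/-- **Theorem 1 of the paper (local variational update), Gaussian-canonical form.** -/
theorem local_variational_update {d : ℕ} (a b : ℝ) (hab : a < b)
    (η1 : ℝ → Matrix (Fin d) (Fin d) ℝ) (η2 : ℝ → Fin d → ℝ) (c : ℝ → ℝ)
    (hη1_meas : ∀ i j, Measurable fun f => η1 f i j)
    (hη2_meas : Measurable η2) (hc_meas : Measurable c)
    (hη1_symm : ∀ f ∈ Set.Icc a b, (η1 f).IsSymm)
    (hη1_pd : ∀ f ∈ Set.Icc a b, (-(η1 f)).PosDef)
    (p : (Fin d → ℝ) → ℝ → ℝ)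
    (hp : p = fun θ f =>
      Real.exp (dotProduct θ (η1 f *ᵥ θ) + dotProduct (η2 f) θ + c f))
    (hp_int : Integrable (fun pr : (Fin d → ℝ) × ℝ => p pr.1 pr.2) (thetaFreqMeasure d a b))
    (hp_pos : 0 < ∫ pr, p pr.1 pr.2 ∂(thetaFreqMeasure d a b)) :
    (∀ f ∈ Set.Icc a b,
      (∫ θ : Fin d → ℝ, p θ f)
        = Real.pi ^ ((d : ℝ) / 2) * (-(η1 f)).det ^ (-(1 : ℝ) / 2) *
          Real.exp (c f - (1/4) * dotProduct (η2 f) ((η1 f)⁻¹ *ᵥ η2 f)))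
    ∧
    (∀ qC : (Fin d → ℝ) → ℝ → ℝ, ∀ qF : ℝ → ℝ,
      Measurable (fun pr : (Fin d → ℝ) × ℝ => qC pr.1 pr.2) →
      (∀ θ f, 0 ≤ qC θ f) → (∀ f, (∫ θ, qC θ f) = 1) →
      Measurable qF → (∀ f, 0 ≤ qF f) → (∫ f in Set.Icc a b, qF f) = 1 →
      Integrable (fun pr : (Fin d → ℝ) × ℝ =>
          (qC pr.1 pr.2 * qF pr.2) *
            Real.log (p pr.1 pr.2 / (qC pr.1 pr.2 * qF pr.2)))
        (thetaFreqMeasure d a b) →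
      structuredELBO a b p qC qF
        ≤ structuredELBO a b p
            (fun θ f =>
              Real.exp (dotProduct θ (η1 f *ᵥ θ) + dotProduct (η2 f) θ) /
                ∫ θ' : Fin d → ℝ,
                  Real.exp (dotProduct θ' (η1 f *ᵥ θ') + dotProduct (η2 f) θ'))
            (fun f =>
              Real.exp (c f - (1/4) * dotProduct (η2 f) ((η1 f)⁻¹ *ᵥ η2 f)
                  - (1/2) * Real.log ((-(η1 f)).det)) /
                ∫ u in Set.Icc a b,
                  Real.exp (c u - (1/4) * dotProduct (η2 u) ((η1 u)⁻¹ *ᵥ η2 u)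
                    - (1/2) * Real.log ((-(η1 u)).det)))) := by
  have hppos : ∀ θ f, 0 < p θ f := by
    intro θ f; rw [hp]; exact Real.exp_pos _
  -- Part (i)
  have part1 : ∀ f ∈ Set.Icc a b,
      (∫ θ : Fin d → ℝ, p θ f)
        = Real.pi ^ ((d : ℝ) / 2) * (-(η1 f)).det ^ (-(1 : ℝ) / 2) *
          Real.exp (c f - (1/4) * dotProduct (η2 f) ((η1 f)⁻¹ *ᵥ η2 f)) := by
    intro f hf
    rw [hp]
    exact gaussian_quad_const_integral (hη1_symm f hf) (hη1_pd f hf) (η2 f) (c f)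
  refine ⟨part1, ?_⟩
  intro qC qF hqC_meas hqC0 hqC1 hqF_meas hqF0 hqF1 hq_int
  set μ := thetaFreqMeasure d a b with hμdef
  set Z : ℝ := ∫ pr, p pr.1 pr.2 ∂μ with hZdef
  have hZpos : 0 < Z := hp_pos
  set P : ℝ := Real.pi ^ ((d : ℝ) / 2) with hPdef
  have hPpos : 0 < P := Real.rpow_pos_of_pos Real.pi_pos _
  -- names for the optimal factors
  set N : ℝ → ℝ := fun f => ∫ θ' : Fin d → ℝ,
      Real.exp (dotProduct θ' (η1 f *ᵥ θ') + dotProduct (η2 f) θ') with hNdef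
  set G : ℝ → ℝ := fun f =>
      Real.exp (c f - (1/4) * dotProduct (η2 f) ((η1 f)⁻¹ *ᵥ η2 f)
        - (1/2) * Real.log ((-(η1 f)).det)) with hGdef
  set ZF : ℝ := ∫ u in Set.Icc a b, G u with hZFdef
  -- value of N
  have hN : ∀ f ∈ Set.Icc a b,
      N f = P * (-(η1 f)).det ^ (-(1:ℝ)/2) *
        Real.exp (-(1/4) * dotProduct (η2 f) ((η1 f)⁻¹ *ᵥ η2 f)) := by
    intro f hf
    rw [hNdef]
    exact gaussian_quad_integral (hη1_symm f hf) (hη1_pd f hf) (η2 f)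
  have hNpos : ∀ f ∈ Set.Icc a b, 0 < N f := by
    intro f hf
    rw [hN f hf]
    have := (hη1_pd f hf).det_pos
    positivity
  -- value of G
  have hG : ∀ f ∈ Set.Icc a b, G f = N f * Real.exp (c f) / P := by
    intro f hf
    have hD : (0:ℝ) < (-(η1 f)).det := (hη1_pd f hf).det_pos
    simp only [hGdef]
    rw [hN f hf]
    have hrpow : (-(η1 f)).det ^ (-(1:ℝ)/2)
        = Real.exp (Real.log ((-(η1 f)).det) * (-(1:ℝ)/2)) := Real.rpow_def_of_pos hD _
    rw [hrpow]
    rw [show c f - (1/4) * dotProduct (η2 f) ((η1 f)⁻¹ *ᵥ η2 f)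
          - (1/2) * Real.log ((-(η1 f)).det)
        = (Real.log ((-(η1 f)).det) * (-(1:ℝ)/2))
          + (-(1/4) * dotProduct (η2 f) ((η1 f)⁻¹ *ᵥ η2 f)) + c f by ring]
    rw [Real.exp_add, Real.exp_add]
    field_simp
  -- marginal of p
  have hMarg : ∀ f ∈ Set.Icc a b, (∫ θ : Fin d → ℝ, p θ f) = N f * Real.exp (c f) := by
    intro f hf
    rw [hp]
    have hsplit : ∀ θ : Fin d → ℝ,
        Real.exp (dotProduct θ (η1 f *ᵥ θ) + dotProduct (η2 f) θ + c f)
          = Real.exp (dotProduct θ (η1 f *ᵥ θ) + dotProduct (η2 f) θ) * Real.exp (c f) :=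
      fun θ => Real.exp_add _ _
    simp_rw [hsplit]
    rw [integral_mul_const]
  have hp_int' : Integrable (fun pr : (Fin d → ℝ) × ℝ => p pr.1 pr.2)
      ((volume : Measure (Fin d → ℝ)).prod (volume.restrict (Set.Icc a b))) := hp_int
  -- Z as an iterated integral
  have hZiter : Z = ∫ f in Set.Icc a b, N f * Real.exp (c f) := by
    have h1 : Z = ∫ f, ∫ θ, p θ f ∂(volume : Measure (Fin d → ℝ))
        ∂(volume.restrict (Set.Icc a b)) := by
      rw [show Z = ∫ pr, p pr.1 pr.2
          ∂((volume : Measure (Fin d → ℝ)).prod (volume.restrict (Set.Icc a b))) from rfl]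
      exact MeasureTheory.integral_prod_symm _ hp_int'
    rw [h1]
    exact MeasureTheory.setIntegral_congr_fun measurableSet_Icc (fun f hf => hMarg f hf)
  -- value of ZF
  have hZF : ZF = Z / P := by
    rw [hZFdef, hZiter]
    rw [MeasureTheory.setIntegral_congr_fun measurableSet_Icc
      (fun f hf => hG f hf), integral_div]
  have hZFpos : 0 < ZF := by rw [hZF]; positivity
  -- the optimal structured density equals p/Z
  have hstar : ∀ f ∈ Set.Icc a b, ∀ θ : Fin d → ℝ,
      (Real.exp (dotProduct θ (η1 f *ᵥ θ) + dotProduct (η2 f) θ) /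
          ∫ θ' : Fin d → ℝ,
            Real.exp (dotProduct θ' (η1 f *ᵥ θ') + dotProduct (η2 f) θ')) *
        (Real.exp (c f - (1/4) * dotProduct (η2 f) ((η1 f)⁻¹ *ᵥ η2 f)
            - (1/2) * Real.log ((-(η1 f)).det)) /
          ∫ u in Set.Icc a b,
            Real.exp (c u - (1/4) * dotProduct (η2 u) ((η1 u)⁻¹ *ᵥ η2 u)
              - (1/2) * Real.log ((-(η1 u)).det)))
        = p θ f / Z := by
    intro f hf θ
    show (Real.exp (dotProduct θ (η1 f *ᵥ θ) + dotProduct (η2 f) θ) / N f) * (G f / ZF)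
      = p θ f / Z
    rw [hG f hf, hZF, hp]
    have hNf := (hNpos f hf).ne'
    field_simp
    simp only [Real.exp_add]
  -- a.e. the second coordinate lies in [a,b]
  have hae : ∀ᵐ pr ∂μ, pr.2 ∈ Set.Icc a b := by
    rw [ae_iff]
    have hset : {pr : (Fin d → ℝ) × ℝ | ¬ pr.2 ∈ Set.Icc a b}
        = Set.univ ×ˢ (Set.Icc a b)ᶜ := by
      ext pr; simp [Set.mem_prod]
    rw [hset, hμdef]
    unfold thetaFreqMeasure
    rw [MeasureTheory.Measure.prod_prod,
      MeasureTheory.Measure.restrict_apply measurableSet_Icc.compl]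
    simp
  -- ELBO of the optimal structured density is log Z
  have key_eq : structuredELBO a b p
      (fun θ f =>
        Real.exp (dotProduct θ (η1 f *ᵥ θ) + dotProduct (η2 f) θ) /
          ∫ θ' : Fin d → ℝ,
            Real.exp (dotProduct θ' (η1 f *ᵥ θ') + dotProduct (η2 f) θ'))
      (fun f =>
        Real.exp (c f - (1/4) * dotProduct (η2 f) ((η1 f)⁻¹ *ᵥ η2 f)
            - (1/2) * Real.log ((-(η1 f)).det)) /
          ∫ u in Set.Icc a b,
            Real.exp (c u - (1/4) * dotProduct (η2 u) ((η1 u)⁻¹ *ᵥ η2 u)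
              - (1/2) * Real.log ((-(η1 u)).det)))
      = Real.log Z := by
    have hrfl : structuredELBO a b p
        (fun θ f =>
          Real.exp (dotProduct θ (η1 f *ᵥ θ) + dotProduct (η2 f) θ) /
            ∫ θ' : Fin d → ℝ,
              Real.exp (dotProduct θ' (η1 f *ᵥ θ') + dotProduct (η2 f) θ'))
        (fun f =>
          Real.exp (c f - (1/4) * dotProduct (η2 f) ((η1 f)⁻¹ *ᵥ η2 f)
              - (1/2) * Real.log ((-(η1 f)).det)) /
            ∫ u in Set.Icc a b,
              Real.exp (c u - (1/4) * dotProduct (η2 u) ((η1 u)⁻¹ *ᵥ η2 u)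
                - (1/2) * Real.log ((-(η1 u)).det)))
        = ∫ pr, ((Real.exp (dotProduct pr.1 (η1 pr.2 *ᵥ pr.1) + dotProduct (η2 pr.2) pr.1) /
              ∫ θ' : Fin d → ℝ,
                Real.exp (dotProduct θ' (η1 pr.2 *ᵥ θ') + dotProduct (η2 pr.2) θ')) *
            (Real.exp (c pr.2 - (1/4) * dotProduct (η2 pr.2) ((η1 pr.2)⁻¹ *ᵥ η2 pr.2)
                - (1/2) * Real.log ((-(η1 pr.2)).det)) /
              ∫ u in Set.Icc a b,
                Real.exp (c u - (1/4) * dotProduct (η2 u) ((η1 u)⁻¹ *ᵥ η2 u)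
                  - (1/2) * Real.log ((-(η1 u)).det)))) *
            Real.log (p pr.1 pr.2 /
              ((Real.exp (dotProduct pr.1 (η1 pr.2 *ᵥ pr.1) + dotProduct (η2 pr.2) pr.1) /
                  ∫ θ' : Fin d → ℝ,
                    Real.exp (dotProduct θ' (η1 pr.2 *ᵥ θ') + dotProduct (η2 pr.2) θ')) *
                (Real.exp (c pr.2 - (1/4) * dotProduct (η2 pr.2) ((η1 pr.2)⁻¹ *ᵥ η2 pr.2)
                    - (1/2) * Real.log ((-(η1 pr.2)).det)) /
                  ∫ u in Set.Icc a b,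
                    Real.exp (c u - (1/4) * dotProduct (η2 u) ((η1 u)⁻¹ *ᵥ η2 u)
                      - (1/2) * Real.log ((-(η1 u)).det))))) ∂μ := rfl
    rw [hrfl]
    have hcong : (fun pr : (Fin d → ℝ) × ℝ =>
        ((Real.exp (dotProduct pr.1 (η1 pr.2 *ᵥ pr.1) + dotProduct (η2 pr.2) pr.1) /
              ∫ θ' : Fin d → ℝ,
                Real.exp (dotProduct θ' (η1 pr.2 *ᵥ θ') + dotProduct (η2 pr.2) θ')) *
            (Real.exp (c pr.2 - (1/4) * dotProduct (η2 pr.2) ((η1 pr.2)⁻¹ *ᵥ η2 pr.2)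
                - (1/2) * Real.log ((-(η1 pr.2)).det)) /
              ∫ u in Set.Icc a b,
                Real.exp (c u - (1/4) * dotProduct (η2 u) ((η1 u)⁻¹ *ᵥ η2 u)
                  - (1/2) * Real.log ((-(η1 u)).det)))) *
            Real.log (p pr.1 pr.2 /
              ((Real.exp (dotProduct pr.1 (η1 pr.2 *ᵥ pr.1) + dotProduct (η2 pr.2) pr.1) /
                  ∫ θ' : Fin d → ℝ,
                    Real.exp (dotProduct θ' (η1 pr.2 *ᵥ θ') + dotProduct (η2 pr.2) θ')) *
                (Real.exp (c pr.2 - (1/4) * dotProduct (η2 pr.2) ((η1 pr.2)⁻¹ *ᵥ η2 pr.2)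
                    - (1/2) * Real.log ((-(η1 pr.2)).det)) /
                  ∫ u in Set.Icc a b,
                    Real.exp (c u - (1/4) * dotProduct (η2 u) ((η1 u)⁻¹ *ᵥ η2 u)
                      - (1/2) * Real.log ((-(η1 u)).det))))))
        =ᵐ[μ] (fun pr : (Fin d → ℝ) × ℝ => p pr.1 pr.2 * (Real.log Z / Z)) := by
      filter_upwards [hae] with pr hpr
      have h1 := hstar pr.2 hpr pr.1
      rw [h1]
      have hppr := hppos pr.1 pr.2
      have hdiv : p pr.1 pr.2 / (p pr.1 pr.2 / Z) = Z := by
        field_simp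
      rw [hdiv]
      ring
    rw [MeasureTheory.integral_congr_ae hcong, integral_mul_const, ← hZdef]
    field_simp
  -- ELBO of any structured density is at most log Z
  have hqC_int : ∀ f, Integrable (fun θ : Fin d → ℝ => qC θ f) := by
    intro f
    by_contra h
    have h1 := hqC1 f
    rw [MeasureTheory.integral_undef h] at h1
    norm_num at h1
  have hqF_int : IntegrableOn qF (Set.Icc a b) := by
    by_contra h
    rw [MeasureTheory.integral_undef h] at hqF1
    norm_num at hqF1
  have hqv_meas : Measurable (fun pr : (Fin d → ℝ) × ℝ => qC pr.1 pr.2 * qF pr.2) :=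
    hqC_meas.mul (hqF_meas.comp measurable_snd)
  have hqv0 : ∀ pr : (Fin d → ℝ) × ℝ, 0 ≤ qC pr.1 pr.2 * qF pr.2 :=
    fun pr => mul_nonneg (hqC0 _ _) (hqF0 _)
  have hlint : ∫⁻ pr, ENNReal.ofReal (qC pr.1 pr.2 * qF pr.2) ∂μ = 1 := by
    rw [hμdef]
    unfold thetaFreqMeasure
    rw [MeasureTheory.lintegral_prod_symm _ hqv_meas.ennreal_ofReal.aemeasurable]
    have hinner : ∀ f : ℝ, ∫⁻ θ : Fin d → ℝ, ENNReal.ofReal (qC θ f * qF f)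
        = ENNReal.ofReal (qF f) := by
      intro f
      have hsp : ∀ θ : Fin d → ℝ, ENNReal.ofReal (qC θ f * qF f)
          = ENNReal.ofReal (qC θ f) * ENNReal.ofReal (qF f) :=
        fun θ => ENNReal.ofReal_mul (hqC0 θ f)
      simp_rw [hsp]
      have hmeasC : Measurable (fun θ : Fin d → ℝ => qC θ f) :=
        hqC_meas.comp (measurable_id.prodMk measurable_const)
      rw [MeasureTheory.lintegral_mul_const _ hmeasC.ennreal_ofReal]
      rw [← MeasureTheory.ofReal_integral_eq_lintegral_ofReal (hqC_int f)
        (Filter.Eventually.of_forall (fun θ => hqC0 θ f)), hqC1 f]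
      simp
    simp_rw [hinner]
    rw [← MeasureTheory.ofReal_integral_eq_lintegral_ofReal hqF_int
      (Filter.Eventually.of_forall hqF0), hqF1]
    simp
  have hqv_int : Integrable (fun pr : (Fin d → ℝ) × ℝ => qC pr.1 pr.2 * qF pr.2) μ := by
    refine ⟨hqv_meas.aestronglyMeasurable, ?_⟩
    rw [MeasureTheory.hasFiniteIntegral_iff_ofReal (Filter.Eventually.of_forall hqv0)]
    rw [hlint]
    exact ENNReal.one_lt_top
  have hqv1 : ∫ pr, qC pr.1 pr.2 * qF pr.2 ∂μ = 1 := by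
    rw [MeasureTheory.integral_eq_lintegral_of_nonneg_ae
      (Filter.Eventually.of_forall hqv0) hqv_meas.aestronglyMeasurable, hlint]
    simp
  have hbound : ∀ pr : (Fin d → ℝ) × ℝ,
      (qC pr.1 pr.2 * qF pr.2) * Real.log (p pr.1 pr.2 / (qC pr.1 pr.2 * qF pr.2))
        ≤ p pr.1 pr.2 / Z - qC pr.1 pr.2 * qF pr.2
          + (qC pr.1 pr.2 * qF pr.2) * Real.log Z := by
    intro pr
    set q : ℝ := qC pr.1 pr.2 * qF pr.2 with hq
    have hppr := hppos pr.1 pr.2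
    rcases (hqv0 pr).lt_or_eq with h | h
    · have hlog := Real.log_le_sub_one_of_pos
        (show 0 < p pr.1 pr.2 / (q * Z) by positivity)
      have hexpand : Real.log (p pr.1 pr.2 / (q * Z))
          = Real.log (p pr.1 pr.2 / q) - Real.log Z := by
        rw [Real.log_div hppr.ne' (by positivity),
          Real.log_mul h.ne' hZpos.ne', Real.log_div hppr.ne' h.ne']
        ring
      rw [hexpand] at hlog
      have h2 : q * (Real.log (p pr.1 pr.2 / q) - Real.log Z)
          ≤ q * (p pr.1 pr.2 / (q * Z) - 1) :=
        mul_le_mul_of_nonneg_left hlog h.le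
      have h3 : q * (p pr.1 pr.2 / (q * Z) - 1) = p pr.1 pr.2 / Z - q := by
        field_simp [show q ≠ 0 from h.ne']
      rw [h3, mul_sub] at h2
      linarith
    · rw [hq, ← h]
      simp only [zero_mul, sub_zero]
      positivity
  have hRHS_int : Integrable (fun pr : (Fin d → ℝ) × ℝ =>
      p pr.1 pr.2 / Z - qC pr.1 pr.2 * qF pr.2
        + (qC pr.1 pr.2 * qF pr.2) * Real.log Z) μ :=
    ((hp_int.div_const Z).sub hqv_int).add (hqv_int.mul_const _)
  have hmono := MeasureTheory.integral_mono hq_int hRHS_int hbound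
  have hRHS_val : ∫ pr, (p pr.1 pr.2 / Z - qC pr.1 pr.2 * qF pr.2
        + (qC pr.1 pr.2 * qF pr.2) * Real.log Z) ∂μ = Real.log Z := by
    have hint0 : Integrable (fun pr : (Fin d → ℝ) × ℝ => p pr.1 pr.2 / Z) μ :=
      hp_int.div_const Z
    have hint1 : Integrable (fun pr : (Fin d → ℝ) × ℝ =>
        p pr.1 pr.2 / Z - qC pr.1 pr.2 * qF pr.2) μ := hint0.sub hqv_int
    have hint2 : Integrable (fun pr : (Fin d → ℝ) × ℝ =>
        (qC pr.1 pr.2 * qF pr.2) * Real.log Z) μ := hqv_int.mul_const _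
    rw [MeasureTheory.integral_add hint1 hint2,
      MeasureTheory.integral_sub hint0 hqv_int,
      integral_div, integral_mul_const, hqv1, ← hZdef, div_self hZpos.ne']
    ring
  have hL : structuredELBO a b p qC qF
      = ∫ pr, (qC pr.1 pr.2 * qF pr.2) *
          Real.log (p pr.1 pr.2 / (qC pr.1 pr.2 * qF pr.2)) ∂μ := rfl
  rw [hL, key_eq]
  rw [hRHS_val] at hmono
  exact hmono
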